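/- Let α be a p×p complex matrix with α·α† ≤ 1 (all singular values < 1), ρ^R = (1 - α·α†)^{1/2}, ρ^L = (1 - α†·α)^{1/2}, and let u be a p×p unitary matrix. Then -α + ρ^R·(1 - u·α†)^{-1}·u·ρ^L = (ρ^R)^{-1}·(u - α)·(1 - α†·u)^{-1}·ρ^L, whenever the inverses exist. -/

import Mathlib

/-!
Positive semidefinite square roots intertwine: from `ρR² α = α ρL²` one gets `ρR α = α ρL`,
because `D = ρR α - α ρL` satisfies `ρR D = -D ρL`, and a trace-positivity argument forces such
a `D` to vanish. Together with the push-through identity `(1 - u α†)⁻¹ u = u (1 - α† u)⁻¹`,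
multiplying the claimed identity on the left by `ρR` turns it into the rational identity
`(1 - α α†) u (1 - α† u)⁻¹ = (u - α) (1 - α† u)⁻¹ + α`.
-/

open Matrix
open scoped ComplexOrder

namespace Matrix

section PosSemidef

variable {m n 𝕜 : Type*} [Fintype m] [Fintype n] [RCLike 𝕜]

open scoped MatrixOrder in
theorem PosSemidef.trace_mul_nonneg {A B : Matrix n n 𝕜} (hA : A.PosSemidef)
    (hB : B.PosSemidef) : 0 ≤ (A * B).trace := by
  classical
  obtain ⟨C, rfl⟩ := CStarAlgebra.nonneg_iff_eq_star_mul_self.mp hB.nonneg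
  rw [star_eq_conjTranspose, ← Matrix.mul_assoc, trace_mul_comm, ← Matrix.mul_assoc]
  exact (hA.mul_mul_conjTranspose_same C).trace_nonneg

open scoped MatrixOrder in
theorem PosSemidef.mul_eq_zero_of_mul_eq_neg_mul {A : Matrix n n 𝕜} {B : Matrix m m 𝕜}
    {D : Matrix n m 𝕜} (hA : A.PosSemidef) (hB : B.PosSemidef) (h : A * D = -(D * B)) :
    A * D = 0 := by
  classical
  obtain ⟨C, rfl⟩ := CStarAlgebra.nonneg_iff_eq_star_mul_self.mp hA.nonneg
  rw [star_eq_conjTranspose] at h ⊢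
  have hnonneg : 0 ≤ ((C * D)ᴴ * (C * D)).trace :=
    (posSemidef_conjTranspose_mul_self _).trace_nonneg
  have hnonpos : ((C * D)ᴴ * (C * D)).trace ≤ 0 := by
    have : ((C * D)ᴴ * (C * D)).trace = -(Dᴴ * D * B).trace := by
      rw [conjTranspose_mul, Matrix.mul_assoc, ← Matrix.mul_assoc Cᴴ, h]
      simp only [Matrix.mul_neg, trace_neg, Matrix.mul_assoc]
    rw [this, neg_nonpos]
    exact (posSemidef_conjTranspose_mul_self D).trace_mul_nonneg hB
  have hCD : C * D = 0 :=
    trace_conjTranspose_mul_self_eq_zero_iff.mp (le_antisymm hnonpos hnonneg)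
  rw [Matrix.mul_assoc, hCD, Matrix.mul_zero]

theorem PosSemidef.mul_eq_mul_of_mul_self_mul_eq {A : Matrix n n 𝕜} {B : Matrix m m 𝕜}
    {X : Matrix n m 𝕜} (hA : A.PosSemidef) (hB : B.PosSemidef) (h : A * A * X = X * (B * B)) :
    A * X = X * B := by
  set D := A * X - X * B with hD
  have hswap : A * D = -(D * B) := by
    rw [hD, Matrix.mul_sub, Matrix.sub_mul, ← Matrix.mul_assoc, h]
    simp only [Matrix.mul_assoc]
    abel
  have hAD : A * D = 0 := hA.mul_eq_zero_of_mul_eq_neg_mul hB hswap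
  have hDB : D * B = 0 := by rwa [hAD, zero_eq_neg] at hswap
  have htrace : (Dᴴ * D).trace = 0 := calc
    (Dᴴ * D).trace = ((A * D)ᴴ * X).trace - ((D * B)ᴴ * X).trace := by
      nth_rw 2 [hD]
      rw [conjTranspose_mul, conjTranspose_mul, hA.isHermitian.eq, hB.isHermitian.eq,
        Matrix.mul_assoc B, trace_mul_comm B, ← trace_sub]
      simp only [Matrix.mul_sub, Matrix.mul_assoc]
    _ = 0 := by rw [hAD, hDB]; simp
  rw [← sub_eq_zero, ← hD]
  exact trace_conjTranspose_mul_self_eq_zero_iff.mp htrace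

end PosSemidef

theorem inv_one_sub_mul_mul_eq_mul_inv_one_sub_mul {m n R : Type*} [Fintype m] [Fintype n]
    [DecidableEq m] [DecidableEq n] [CommRing R] (A : Matrix m n R) (B : Matrix n m R) :
    (1 - A * B)⁻¹ * A = A * (1 - B * A)⁻¹ := by
  by_cases h : IsUnit (1 - B * A).det
  · have h' : IsUnit (1 - A * B).det := det_one_sub_mul_comm A B ▸ h
    have hswap : A * (1 - B * A) = (1 - A * B) * A := by
      rw [Matrix.mul_sub, Matrix.sub_mul, Matrix.mul_one, Matrix.one_mul, Matrix.mul_assoc]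
    calc (1 - A * B)⁻¹ * A = (1 - A * B)⁻¹ * (A * (1 - B * A) * (1 - B * A)⁻¹) := by
          rw [mul_nonsing_inv_cancel_right _ _ h]
      _ = (1 - A * B)⁻¹ * ((1 - A * B) * (A * (1 - B * A)⁻¹)) := by
          rw [hswap, Matrix.mul_assoc]
      _ = A * (1 - B * A)⁻¹ := nonsing_inv_mul_cancel_left _ _ h'
  · have h' : ¬IsUnit (1 - A * B).det := det_one_sub_mul_comm A B ▸ h
    rw [nonsing_inv_apply_not_isUnit _ h, nonsing_inv_apply_not_isUnit _ h', Matrix.zero_mul,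
      Matrix.mul_zero]

end Matrix

theorem matrix_moebius_identity (p : ℕ) (α ρR ρL u : Matrix (Fin p) (Fin p) ℂ)
    (hρR : ρR.PosSemidef) (hρR2 : ρR * ρR = 1 - α * αᴴ)
    (hρL : ρL.PosSemidef) (hρL2 : ρL * ρL = 1 - αᴴ * α)
    (h2 : IsUnit (1 - αᴴ * u)) (h3 : IsUnit ρR) :
    -α + ρR * (1 - u * αᴴ)⁻¹ * u * ρL = ρR⁻¹ * (u - α) * (1 - αᴴ * u)⁻¹ * ρL := by
  have hdet := (isUnit_iff_isUnit_det _).mp h2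
  have hdetR := (isUnit_iff_isUnit_det _).mp h3
  have hintertwine : ρR * α = α * ρL :=
    hρR.mul_eq_mul_of_mul_self_mul_eq hρL (by rw [hρR2, hρL2]; noncomm_ring)
  have hsplit : (1 - α * αᴴ) * u * (1 - αᴴ * u)⁻¹ = (u - α) * (1 - αᴴ * u)⁻¹ + α := by
    rw [show (1 - α * αᴴ) * u = u - α + α * (1 - αᴴ * u) by noncomm_ring, Matrix.add_mul,
      mul_nonsing_inv_cancel_right _ _ hdet]
  apply h3.mul_left_cancel
  calc ρR * (-α + ρR * (1 - u * αᴴ)⁻¹ * u * ρL)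
      = -(ρR * α) + ρR * ρR * ((1 - u * αᴴ)⁻¹ * u) * ρL := by noncomm_ring
    _ = -(α * ρL) + ((u - α) * (1 - αᴴ * u)⁻¹ + α) * ρL := by
        rw [hintertwine, hρR2, inv_one_sub_mul_mul_eq_mul_inv_one_sub_mul, ← Matrix.mul_assoc,
          hsplit]
    _ = (u - α) * (1 - αᴴ * u)⁻¹ * ρL := by noncomm_ring
    _ = ρR * (ρR⁻¹ * (u - α) * (1 - αᴴ * u)⁻¹ * ρL) := by
        simp only [Matrix.mul_assoc, mul_nonsing_inv_cancel_left _ _ hdetR]
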